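/- arXiv:math/0306439 — 2 statements merged into one kernel-verified Lean document; each statement's English description precedes it below -/
import Mathlib

section
/- For all integers m ≥ 1 and p ≥ 2, the presented group with generators α, γ and single relator w = α^(m(p-1)+1) · (γ⁻¹ · α^(-m))^(p-1) · γ⁻¹ is isomorphic to the presented group with generators x, y and single relator x^(mp+1) · y^(-p). -/
/-- The generator `α` of the free group on two generators. -/
def gα : FreeGroup (Fin 2) := FreeGroup.of 0

/-- The generator `γ` of the free group on two generators. -/
def gγ : FreeGroup (Fin 2) := FreeGroup.of 1

/-- The Nielsen automorphism `α ↦ α`, `γ ↦ α^m γ`. -/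
def fHom (m : ℤ) : FreeGroup (Fin 2) →* FreeGroup (Fin 2) :=
  FreeGroup.lift (fun i => if i = 0 then gα else gα ^ m * gγ)

def gHom (m : ℤ) : FreeGroup (Fin 2) →* FreeGroup (Fin 2) :=
  FreeGroup.lift (fun i => if i = 0 then gα else gα ^ (-m) * gγ)

lemma fHom_gα (m : ℤ) : fHom m gα = gα := by simp [fHom, gα]
lemma fHom_gγ (m : ℤ) : fHom m gγ = gα ^ m * gγ := by simp [fHom, gγ, gα]
lemma gHom_gα (m : ℤ) : gHom m gα = gα := by simp [gHom, gα]
lemma gHom_gγ (m : ℤ) : gHom m gγ = gα ^ (-m) * gγ := by simp [gHom, gγ, gα]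

def eAut (m : ℤ) : FreeGroup (Fin 2) ≃* FreeGroup (Fin 2) :=
  MonoidHom.toMulEquiv (fHom m) (gHom m)
    (by
      apply FreeGroup.ext_hom
      intro a
      fin_cases a <;>
        simp only [MonoidHom.comp_apply, MonoidHom.id_apply]
      · show gHom m (fHom m gα) = gα
        rw [fHom_gα, gHom_gα]
      · show gHom m (fHom m gγ) = gγ
        rw [fHom_gγ, map_mul, map_zpow, gHom_gα, gHom_gγ]
        group)
    (by
      apply FreeGroup.ext_hom
      intro a
      fin_cases a <;>
        simp only [MonoidHom.comp_apply, MonoidHom.id_apply]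
      · show fHom m (gHom m gα) = gα
        rw [gHom_gα, fHom_gα]
      · show fHom m (gHom m gγ) = gγ
        rw [gHom_gγ, map_mul, map_zpow, fHom_gα, fHom_gγ]
        group)

lemma normalClosure_conj (g a : FreeGroup (Fin 2)) :
    Subgroup.normalClosure {g * a * g⁻¹} = Subgroup.normalClosure ({a} : Set (FreeGroup (Fin 2))) := by
  apply le_antisymm
  · apply Subgroup.normalClosure_le_normal
    rw [Set.singleton_subset_iff]
    exact Subgroup.Normal.conj_mem (Subgroup.normalClosure_normal)
      a (Subgroup.subset_normalClosure (Set.mem_singleton a)) g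
  · apply Subgroup.normalClosure_le_normal
    rw [Set.singleton_subset_iff]
    have := Subgroup.Normal.conj_mem (Subgroup.normalClosure_normal
      (s := ({g * a * g⁻¹} : Set (FreeGroup (Fin 2)))))
      _ (Subgroup.subset_normalClosure (Set.mem_singleton _)) g⁻¹
    simpa [mul_assoc] using this

lemma keylem {G : Type*} [Group G] (a y : G) (m p : ℤ) :
    a ^ (m * p + 1) * y ^ (-p) =
      a ^ m * (a ^ (m * (p - 1) + 1) * (y ^ (-(p - 1)) * (y⁻¹ * a ^ m))) * (a ^ m)⁻¹ := by
  have e1 : a ^ (m * p + 1) = a ^ m * a ^ (m * (p - 1) + 1) := by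
    rw [← zpow_add]; congr 1; ring
  have e2 : y ^ (-p) = y ^ (-(p - 1)) * y⁻¹ := by
    rw [← zpow_neg_one, ← zpow_add]; congr 1; ring
  rw [e1, e2]; group

/-- The presented group `⟨α, γ | w⟩`, where `w = α^(m(p-1)+1) (γ⁻¹ α^(-m))^(p-1) γ⁻¹`, is
isomorphic to the torus knot group `⟨x, y | x^(mp+1) y^(-p)⟩`. -/
theorem stmt_5 (m p : ℤ) (hm : 1 ≤ m) (hp : 2 ≤ p) :
    Nonempty
      (PresentedGroup ({gα ^ (m * (p - 1) + 1) * (gγ⁻¹ * gα ^ (-m)) ^ (p - 1) * gγ⁻¹} :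
          Set (FreeGroup (Fin 2))) ≃*
       PresentedGroup ({gα ^ (m * p + 1) * gγ ^ (-p)} : Set (FreeGroup (Fin 2)))) := by
  have key : fHom m (gα ^ (m * p + 1) * gγ ^ (-p)) =
      gα ^ m * (gα ^ (m * (p - 1) + 1) * (gγ⁻¹ * gα ^ (-m)) ^ (p - 1) * gγ⁻¹) * (gα ^ m)⁻¹ := by
    rw [map_mul, map_zpow, map_zpow, fHom_gα, fHom_gγ]
    have h1 : (gγ⁻¹ * gα ^ (-m)) = (gα ^ m * gγ)⁻¹ := by group
    have h3 : gγ⁻¹ = (gα ^ m * gγ)⁻¹ * (gα ^ m) := by group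
    rw [h1]
    conv_rhs => rw [h3]
    rw [inv_zpow']
    rw [mul_assoc (gα ^ (m * (p - 1) + 1))]
    exact keylem gα (gα ^ m * gγ) m p
  have hmap : (Subgroup.normalClosure ({gα ^ (m * p + 1) * gγ ^ (-p)} :
      Set (FreeGroup (Fin 2)))).map (eAut m).toMonoidHom =
      Subgroup.normalClosure {gα ^ (m * (p - 1) + 1) * (gγ⁻¹ * gα ^ (-m)) ^ (p - 1) * gγ⁻¹} := by
    have hf : (eAut m).toMonoidHom = fHom m := rfl
    rw [hf, Subgroup.map_normalClosure _ _ (by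
      rw [← hf]; exact (eAut m).surjective : Function.Surjective (fHom m)),
      Set.image_singleton, key, normalClosure_conj]
  exact ⟨(QuotientGroup.congr _ _ (eAut m) hmap).symm⟩
end

section
/- For all integers m ≥ 2 and p ≥ 2, the presented group with generators α, γ and single relator w = α^(m(p-1)-1) · (γ⁻¹ · α^(-m))^(p-1) · γ⁻¹ is isomorphic to the presented group with generators x, y and single relator x^(mp-1) · y^(-p). -/
set_option maxHeartbeats 1000000

/-- The endomorphism sending `α ↦ α`, `γ ↦ α^m γ`. -/
def χf (m : ℤ) : FreeGroup (Fin 2) →* FreeGroup (Fin 2) :=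
  FreeGroup.lift (fun i => if i = 0 then gα else gα ^ m * gγ)

/-- The endomorphism sending `α ↦ α`, `γ ↦ α^(-m) γ`. -/
def χg (m : ℤ) : FreeGroup (Fin 2) →* FreeGroup (Fin 2) :=
  FreeGroup.lift (fun i => if i = 0 then gα else gα ^ (-m) * gγ)

lemma χ_inv_left (m : ℤ) : (χg m).comp (χf m) = MonoidHom.id _ := by
  apply FreeGroup.ext_hom
  intro a
  fin_cases a <;>
    simp [χf, χg, gα, gγ, map_zpow, mul_assoc, ← zpow_add]

lemma χ_inv_right (m : ℤ) : (χf m).comp (χg m) = MonoidHom.id _ := by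
  apply FreeGroup.ext_hom
  intro a
  fin_cases a <;>
    simp [χf, χg, gα, gγ, map_zpow, mul_assoc, ← zpow_add]

/-- The automorphism sending `α ↦ α`, `γ ↦ α^m γ`. -/
def χ (m : ℤ) : FreeGroup (Fin 2) ≃* FreeGroup (Fin 2) :=
  MonoidHom.toMulEquiv (χf m) (χg m) (χ_inv_left m) (χ_inv_right m)

lemma χ_apply (m : ℤ) (x : FreeGroup (Fin 2)) : χ m x = χf m x := rfl

lemma χ_gα (m : ℤ) : χ m gα = gα := by
  simp [χ_apply, χf, gα]

lemma χ_gγ (m : ℤ) : χ m gγ = gα ^ m * gγ := by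
  simp [χ_apply, χf, gγ, gα]

lemma key_conj (m p : ℤ) :
    gα ^ (m * (p - 1) - 1) * (gγ⁻¹ * gα ^ (-m)) ^ (p - 1) * gγ⁻¹ =
      gα ^ (-m) * (gα ^ (m * p - 1) * (gα ^ m * gγ) ^ (-p)) * gα ^ m := by
  have h1 : ((gα ^ m * gγ) ^ (-p) : FreeGroup (Fin 2)) = (gγ⁻¹ * gα ^ (-m)) ^ p := by
    rw [zpow_neg, ← inv_zpow, mul_inv_rev, ← zpow_neg]
  rw [h1]
  have h2 : ((gγ⁻¹ * gα ^ (-m)) ^ p : FreeGroup (Fin 2)) =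
      (gγ⁻¹ * gα ^ (-m)) ^ (p - 1) * (gγ⁻¹ * gα ^ (-m)) := by
    rw [← zpow_add_one, sub_add_cancel]
  rw [h2]
  have h3 : (gα ^ (-m) * gα ^ (m * p - 1) : FreeGroup (Fin 2)) = gα ^ (m * (p - 1) - 1) := by
    rw [← zpow_add]; ring_nf
  group

/-- The presented group `⟨α, γ | w⟩`, where `w = α^(m(p-1)-1) (γ⁻¹ α^(-m))^(p-1) γ⁻¹`, is
isomorphic to the torus knot group `⟨x, y | x^(mp-1) y^(-p)⟩`. -/
theorem stmt_10 (m p : ℤ) (hm : 2 ≤ m) (hp : 2 ≤ p) :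
    Nonempty
      (PresentedGroup ({gα ^ (m * (p - 1) - 1) * (gγ⁻¹ * gα ^ (-m)) ^ (p - 1) * gγ⁻¹} :
          Set (FreeGroup (Fin 2))) ≃*
       PresentedGroup ({gα ^ (m * p - 1) * gγ ^ (-p)} : Set (FreeGroup (Fin 2)))) := by
  set r1 : FreeGroup (Fin 2) :=
    gα ^ (m * (p - 1) - 1) * (gγ⁻¹ * gα ^ (-m)) ^ (p - 1) * gγ⁻¹ with hr1
  set r2 : FreeGroup (Fin 2) := gα ^ (m * p - 1) * gγ ^ (-p) with hr2
  have hχr2 : χ m r2 = gα ^ (m * p - 1) * (gα ^ m * gγ) ^ (-p) := by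
    rw [hr2, map_mul, map_zpow, map_zpow, χ_gα, χ_gγ]
  have hconj : r1 = gα ^ (-m) * χ m r2 * gα ^ m := by
    rw [hχr2, hr1, key_conj]
  have hmap : (Subgroup.normalClosure {r2}).map ((χ m) : FreeGroup (Fin 2) →* FreeGroup (Fin 2))
      = Subgroup.normalClosure {r1} := by
    have h0 : (Subgroup.normalClosure {r2}).map
        ((χ m) : FreeGroup (Fin 2) →* FreeGroup (Fin 2)) =
        Subgroup.normalClosure (((χ m) : FreeGroup (Fin 2) →* FreeGroup (Fin 2)) '' {r2}) :=
      Subgroup.map_normalClosure _ _ (χ m).surjective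
    rw [h0, Set.image_singleton]
    apply le_antisymm
    · apply Subgroup.normalClosure_le_normal
      rw [Set.singleton_subset_iff]
      show (χ m) r2 ∈ (Subgroup.normalClosure {r1} : Subgroup (FreeGroup (Fin 2)))
      have : χ m r2 = gα ^ m * r1 * (gα ^ m)⁻¹ := by
        rw [hconj]; group
      rw [this]
      have h : r1 ∈ Subgroup.normalClosure ({r1} : Set (FreeGroup (Fin 2))) :=
        Subgroup.subset_normalClosure (Set.mem_singleton r1)
      exact Subgroup.Normal.conj_mem Subgroup.normalClosure_normal r1 h _
    · apply Subgroup.normalClosure_le_normal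
      rw [Set.singleton_subset_iff]
      show r1 ∈ (Subgroup.normalClosure {(χ m) r2} : Subgroup (FreeGroup (Fin 2)))
      have : r1 = (gα ^ m)⁻¹ * χ m r2 * ((gα ^ m)⁻¹)⁻¹ := by
        rw [hconj]; group
      rw [this]
      have h : χ m r2 ∈ Subgroup.normalClosure ({χ m r2} : Set (FreeGroup (Fin 2))) :=
        Subgroup.subset_normalClosure (Set.mem_singleton _)
      exact Subgroup.Normal.conj_mem Subgroup.normalClosure_normal _ h _
  exact ⟨(QuotientGroup.congr (Subgroup.normalClosure {r2})
    (Subgroup.normalClosure {r1}) (χ m) hmap).symm⟩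
end
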